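/- arXiv:1903.06729 — 3 statements merged into one kernel-verified Lean document; each statement's English description precedes it below -/
import Mathlib

section
/- Let $\sigma > 1$. Then as $\rho \to \infty$, $\int_{\rho}^{\infty} \sin((2\rho)^{1/2} - (2s)^{1/2}) s^{-\sigma} \, ds = -\sqrt{2}\, \rho^{-\sigma + 1/2} + O(\rho^{-\sigma - 1/2})$. -/
open MeasureTheory Real Set Filter

namespace SinAsym

lemma hasDerivAt_sqrt2mul {s : ℝ} (hs : 0 < s) :
    HasDerivAt (fun x : ℝ => Real.sqrt (2 * x)) (1 / Real.sqrt (2 * s)) s := by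
  have h2s : (2 : ℝ) * s ≠ 0 := by positivity
  have h := (Real.hasDerivAt_sqrt h2s).comp s ((hasDerivAt_id s).const_mul 2)
  refine h.congr_deriv ?_
  have hpos : 0 < Real.sqrt (2 * s) := Real.sqrt_pos.mpr (by positivity)
  field_simp

lemma integrableOn_trig (φ : ℝ → ℝ) (hφc : Continuous φ) (hφ : ∀ x, |φ x| ≤ 1)
    {τ ρ : ℝ} (hτ : 1 < τ) (hρ : 0 < ρ) :
    IntegrableOn (fun s : ℝ => φ (Real.sqrt (2 * ρ) - Real.sqrt (2 * s)) * s ^ (-τ)) (Ioi ρ) := by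
  have hb : IntegrableOn (fun s : ℝ => s ^ (-τ)) (Ioi ρ) :=
    integrableOn_Ioi_rpow_of_lt (by linarith) hρ
  refine hb.mono' ?_ ?_
  · apply ContinuousOn.aestronglyMeasurable _ measurableSet_Ioi
    apply ContinuousOn.mul
    · exact (hφc.comp (by continuity)).continuousOn
    · intro s hs
      exact (Real.continuousAt_rpow_const s (-τ)
        (Or.inl (ne_of_gt (hρ.trans hs)))).continuousWithinAt
  · filter_upwards [ae_restrict_mem measurableSet_Ioi] with s hs
    have hsp : (0 : ℝ) ≤ s := (hρ.trans hs).le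
    have h1 : (0:ℝ) ≤ s ^ (-τ) := Real.rpow_nonneg hsp _
    rw [Real.norm_eq_abs, abs_mul, abs_of_nonneg h1]
    calc |φ _| * s ^ (-τ) ≤ 1 * s ^ (-τ) := by gcongr; exact hφ _
      _ = s ^ (-τ) := one_mul _

lemma abs_integral_trig_le (φ : ℝ → ℝ) (hφc : Continuous φ) (hφ : ∀ x, |φ x| ≤ 1)
    {τ ρ : ℝ} (hτ : 1 < τ) (hρ : 0 < ρ) :
    |∫ s in Ioi ρ, φ (Real.sqrt (2 * ρ) - Real.sqrt (2 * s)) * s ^ (-τ)|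
      ≤ ρ ^ (1 - τ) / (τ - 1) := by
  have hb : IntegrableOn (fun s : ℝ => s ^ (-τ)) (Ioi ρ) :=
    integrableOn_Ioi_rpow_of_lt (by linarith) hρ
  have hint := integrableOn_trig φ hφc hφ hτ hρ
  calc |∫ s in Ioi ρ, φ (Real.sqrt (2 * ρ) - Real.sqrt (2 * s)) * s ^ (-τ)|
      = ‖∫ s in Ioi ρ, φ (Real.sqrt (2 * ρ) - Real.sqrt (2 * s)) * s ^ (-τ)‖ :=
        (Real.norm_eq_abs _).symm
    _ ≤ ∫ s in Ioi ρ, ‖φ (Real.sqrt (2 * ρ) - Real.sqrt (2 * s)) * s ^ (-τ)‖ :=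
        norm_integral_le_integral_norm _
    _ ≤ ∫ s in Ioi ρ, s ^ (-τ) := by
        refine setIntegral_mono_on hint.norm hb measurableSet_Ioi ?_
        intro s hs
        have hsp : (0 : ℝ) ≤ s := (hρ.trans hs).le
        have h1 : (0:ℝ) ≤ s ^ (-τ) := Real.rpow_nonneg hsp _
        rw [Real.norm_eq_abs, abs_mul, abs_of_nonneg h1]
        calc |φ _| * s ^ (-τ) ≤ 1 * s ^ (-τ) := by gcongr; exact hφ _
          _ = s ^ (-τ) := one_mul _
    _ = ρ ^ (1 - τ) / (τ - 1) := by
        rw [integral_Ioi_rpow_of_lt (by linarith) hρ]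
        rw [show -τ + 1 = 1 - τ by ring]
        rw [div_eq_div_iff (by linarith) (by linarith)]
        ring

/-- Main integration by parts identity. -/
lemma ibp (ψ χ : ℝ → ℝ) (hd : ∀ x, HasDerivAt ψ (χ x) x)
    (hψ : ∀ x, |ψ x| ≤ 1) (hχ : ∀ x, |χ x| ≤ 1) (hψc : Continuous ψ) (hχc : Continuous χ)
    {τ ρ : ℝ} (hτ : 1 < τ) (hρ : 0 < ρ) :
    ∫ s in Ioi ρ, χ (Real.sqrt (2 * ρ) - Real.sqrt (2 * s)) * s ^ (-τ)
      = Real.sqrt 2 * ρ ^ (1/2 - τ) * ψ 0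
        + Real.sqrt 2 * (1/2 - τ) *
          ∫ s in Ioi ρ, ψ (Real.sqrt (2 * ρ) - Real.sqrt (2 * s)) * s ^ (-(τ + 1/2)) := by
  set c := Real.sqrt (2 * ρ) with hc
  set F : ℝ → ℝ := fun s => Real.sqrt 2 * (s ^ (1/2 - τ) * ψ (c - Real.sqrt (2 * s))) with hF
  set F' : ℝ → ℝ := fun s => Real.sqrt 2 * (1/2 - τ) * s ^ (-(τ + 1/2)) * ψ (c - Real.sqrt (2 * s))
      - χ (c - Real.sqrt (2 * s)) * s ^ (-τ) with hF'
  have hs2 : (0:ℝ) < Real.sqrt 2 := by positivity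
  have hderiv : ∀ s ∈ Ioi ρ, HasDerivAt F (F' s) s := by
    intro s hs
    have hsp : (0 : ℝ) < s := hρ.trans hs
    have h1 : HasDerivAt (fun x : ℝ => x ^ (1/2 - τ)) ((1/2 - τ) * s ^ (1/2 - τ - 1)) s :=
      Real.hasDerivAt_rpow_const (Or.inl hsp.ne')
    have h2 : HasDerivAt (fun x : ℝ => ψ (c - Real.sqrt (2 * x)))
        (χ (c - Real.sqrt (2 * s)) * (0 - 1 / Real.sqrt (2 * s))) s :=
      (hd _).comp s ((hasDerivAt_const s c).sub (hasDerivAt_sqrt2mul hsp))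
    have h3 := (h1.mul h2).const_mul (Real.sqrt 2)
    refine h3.congr_deriv (Eq.symm ?_)
    have e1 : s ^ (1/2 - τ - 1) = s ^ (-(τ + 1/2)) := by
      rw [show (1/2 - τ - 1 : ℝ) = -(τ + 1/2) by ring]
    have e2 : Real.sqrt 2 * (s ^ (1/2 - τ) * (1 / Real.sqrt (2 * s))) = s ^ (-τ) := by
      rw [Real.sqrt_mul (by norm_num) s, Real.sqrt_eq_rpow s]
      have hn1 : s ^ ((1:ℝ)/2) ≠ 0 := by positivity
      have hn2 : Real.sqrt 2 ≠ 0 := ne_of_gt hs2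
      field_simp
      rw [← Real.rpow_add hsp]
      congr 1
      ring
    linear_combination (Real.sqrt 2 * (1/2 - τ) * ψ (c - Real.sqrt (2 * s))) * e1.symm
      + χ (c - Real.sqrt (2 * s)) * e2
  have hcont : ContinuousWithinAt F (Ici ρ) ρ := by
    exact (((Real.continuousAt_rpow_const ρ _ (Or.inl hρ.ne')).continuousWithinAt).mul
      ((hψc.comp (by continuity)).continuousWithinAt)).const_mul (Real.sqrt 2)
  have htend : Tendsto F atTop (nhds 0) := by
    have hb : Tendsto (fun s : ℝ => Real.sqrt 2 * s ^ (-(τ - 1/2))) atTop (nhds 0) := by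
      simpa using (tendsto_rpow_neg_atTop (y := τ - 1/2) (by linarith)).const_mul (Real.sqrt 2)
    apply squeeze_zero_norm' ?_ hb
    filter_upwards [eventually_ge_atTop (0:ℝ)] with s hs
    rw [Real.norm_eq_abs, hF]
    simp only
    rw [abs_mul, abs_mul, abs_of_nonneg hs2.le,
      abs_of_nonneg (Real.rpow_nonneg hs (1/2 - τ)),
      show (1/2 - τ : ℝ) = -(τ - 1/2) by ring]
    calc Real.sqrt 2 * (s ^ (-(τ - 1/2)) * |ψ _|)
        ≤ Real.sqrt 2 * (s ^ (-(τ - 1/2)) * 1) := by gcongr; exact hψ _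
      _ = Real.sqrt 2 * s ^ (-(τ - 1/2)) := by ring
  have hint1 := integrableOn_trig ψ hψc hψ (τ := τ + 1/2) (by linarith) hρ
  have hint2 := integrableOn_trig χ hχc hχ hτ hρ
  have hint1' : IntegrableOn
      (fun s : ℝ => Real.sqrt 2 * (1/2 - τ) * s ^ (-(τ + 1/2)) * ψ (c - Real.sqrt (2 * s)))
      (Ioi ρ) := by
    have h0 : IntegrableOn
        (fun s : ℝ => Real.sqrt 2 * (1/2 - τ) * (ψ (c - Real.sqrt (2 * s)) * s ^ (-(τ + 1/2))))
        (Ioi ρ) := hint1.const_mul _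
    exact h0.congr_fun (fun s _ => by ring) measurableSet_Ioi
  have hF'int : IntegrableOn F' (Ioi ρ) := hint1'.sub hint2
  have key := integral_Ioi_of_hasDerivAt_of_tendsto hcont hderiv hF'int htend
  have hFρ : F ρ = Real.sqrt 2 * (ρ ^ (1/2 - τ) * ψ 0) := by
    simp [hF, hc]
  rw [zero_sub, hFρ] at key
  have hsplit : ∫ s in Ioi ρ, F' s
      = Real.sqrt 2 * (1/2 - τ) *
          (∫ s in Ioi ρ, ψ (c - Real.sqrt (2 * s)) * s ^ (-(τ + 1/2)))
        - ∫ s in Ioi ρ, χ (c - Real.sqrt (2 * s)) * s ^ (-τ) := by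
    rw [hF', integral_sub hint1' hint2]
    congr 1
    rw [← integral_const_mul]
    exact setIntegral_congr_fun measurableSet_Ioi (fun s _ => by ring)
  rw [hsplit] at key
  linear_combination (-1 : ℝ) * key


lemma ibp_sin {τ ρ : ℝ} (hτ : 1 < τ) (hρ : 0 < ρ) :
    ∫ s in Ioi ρ, Real.sin (Real.sqrt (2 * ρ) - Real.sqrt (2 * s)) * s ^ (-τ)
      = -(Real.sqrt 2 * ρ ^ (1/2 - τ))
        + Real.sqrt 2 * (τ - 1/2) *
          ∫ s in Ioi ρ, Real.cos (Real.sqrt (2 * ρ) - Real.sqrt (2 * s)) * s ^ (-(τ + 1/2)) := by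
  have h := ibp (fun x => -Real.cos x) Real.sin
    (fun x => (Real.hasDerivAt_cos x).neg.congr_deriv (by simp))
    (fun x => by simpa using Real.abs_cos_le_one x)
    (fun x => Real.abs_sin_le_one x)
    Real.continuous_cos.neg Real.continuous_sin hτ hρ
  simp only [Real.cos_zero] at h
  have hneg : ∫ s in Ioi ρ, -Real.cos (Real.sqrt (2 * ρ) - Real.sqrt (2 * s)) * s ^ (-(τ + 1/2))
      = -∫ s in Ioi ρ, Real.cos (Real.sqrt (2 * ρ) - Real.sqrt (2 * s)) * s ^ (-(τ + 1/2)) := by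
    rw [← integral_neg]
    exact setIntegral_congr_fun measurableSet_Ioi (fun s _ => by ring)
  rw [hneg] at h
  rw [h]; ring

lemma ibp_cos {τ ρ : ℝ} (hτ : 1 < τ) (hρ : 0 < ρ) :
    ∫ s in Ioi ρ, Real.cos (Real.sqrt (2 * ρ) - Real.sqrt (2 * s)) * s ^ (-τ)
      = -(Real.sqrt 2 * (τ - 1/2)) *
          ∫ s in Ioi ρ, Real.sin (Real.sqrt (2 * ρ) - Real.sqrt (2 * s)) * s ^ (-(τ + 1/2)) := by
  have h := ibp Real.sin Real.cos (fun x => Real.hasDerivAt_sin x)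
    (fun x => Real.abs_sin_le_one x) (fun x => Real.abs_cos_le_one x)
    Real.continuous_sin Real.continuous_cos hτ hρ
  simp only [Real.sin_zero, mul_zero, zero_add] at h
  rw [h]; ring

end SinAsym

open SinAsym in

theorem sin_integral_asymptotic (σ : ℝ) (hσ : 1 < σ) :
    ∃ C > 0, ∃ ρ₀ : ℝ, ∀ ρ ≥ ρ₀,
      |(∫ s in Ioi ρ, Real.sin (Real.sqrt (2 * ρ) - Real.sqrt (2 * s)) * s ^ (-σ))
        + Real.sqrt 2 * ρ ^ (-σ + 1 / 2)| ≤ C * ρ ^ (-σ - 1 / 2) := by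
  refine ⟨8 * σ ^ 2, by positivity, 1, fun ρ hρ => ?_⟩
  have hρ0 : (0:ℝ) < ρ := lt_of_lt_of_le one_pos hρ
  have hs2 : (0:ℝ) < Real.sqrt 2 := by positivity
  have h22 : Real.sqrt 2 * Real.sqrt 2 = 2 := Real.mul_self_sqrt (by norm_num)
  have hs2le : Real.sqrt 2 ≤ 2 := by nlinarith [Real.sqrt_nonneg 2]
  have hS := ibp_sin (τ := σ) hσ hρ0
  have hA := ibp_cos (τ := σ + 1/2) (by linarith) hρ0
  have hB := ibp_sin (τ := σ + 1) (by linarith) hρ0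
  have hD := abs_integral_trig_le Real.cos Real.continuous_cos
    (fun x => Real.abs_cos_le_one x) (τ := σ + 3/2) (by linarith) hρ0
  rw [show σ + 1/2 + 1/2 = σ + 1 by ring, show σ + 1/2 - 1/2 = σ by ring] at hA
  rw [show σ + 1 + 1/2 = σ + 3/2 by ring, show 1/2 - (σ + 1) = -σ - 1/2 by ring,
    show σ + 1 - 1/2 = σ + 1/2 by ring] at hB
  rw [show 1 - (σ + 3/2) = -σ - 1/2 by ring, show σ + 3/2 - 1 = σ + 1/2 by ring] at hD
  rw [show (1/2 - σ : ℝ) = -σ + 1/2 by ring] at hS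
  set P := ∫ s in Ioi ρ, Real.sin (Real.sqrt (2 * ρ) - Real.sqrt (2 * s)) * s ^ (-σ) with hP
  set A := ∫ s in Ioi ρ, Real.cos (Real.sqrt (2 * ρ) - Real.sqrt (2 * s)) * s ^ (-(σ + 1/2))
    with hAdef
  set B := ∫ s in Ioi ρ, Real.sin (Real.sqrt (2 * ρ) - Real.sqrt (2 * s)) * s ^ (-(σ + 1))
    with hBdef
  set D := ∫ s in Ioi ρ, Real.cos (Real.sqrt (2 * ρ) - Real.sqrt (2 * s)) * s ^ (-(σ + 3/2))
    with hDdef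
  have hρpow : (0:ℝ) ≤ ρ ^ (-σ - 1/2) := Real.rpow_nonneg hρ0.le _
  have hρpow2 : (0:ℝ) ≤ ρ ^ (-σ - 1/2) / (σ + 1/2) := by positivity
  have hDle : |D| ≤ ρ ^ (-σ - 1/2) / (σ + 1/2) := hD
  have hBle : |B| ≤ 2 * Real.sqrt 2 * ρ ^ (-σ - 1/2) := by
    rw [hB]
    have hsig : (0:ℝ) < σ + 1/2 := by linarith
    have e1 : |-(Real.sqrt 2 * ρ ^ (-σ - 1/2))| = Real.sqrt 2 * ρ ^ (-σ - 1/2) := by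
      rw [abs_neg, abs_of_nonneg (mul_nonneg hs2.le hρpow)]
    have e2 : |Real.sqrt 2 * (σ + 1/2) * D| ≤ Real.sqrt 2 * ρ ^ (-σ - 1/2) := by
      rw [abs_mul, abs_of_nonneg (mul_nonneg hs2.le hsig.le)]
      calc Real.sqrt 2 * (σ + 1/2) * |D|
          ≤ Real.sqrt 2 * (σ + 1/2) * (ρ ^ (-σ - 1/2) / (σ + 1/2)) := by
            apply mul_le_mul_of_nonneg_left hDle (mul_nonneg hs2.le hsig.le)
        _ = Real.sqrt 2 * ρ ^ (-σ - 1/2) := by field_simp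
    calc |-(Real.sqrt 2 * ρ ^ (-σ - 1/2)) + Real.sqrt 2 * (σ + 1/2) * D|
        ≤ |-(Real.sqrt 2 * ρ ^ (-σ - 1/2))| + |Real.sqrt 2 * (σ + 1/2) * D| := abs_add_le _ _
      _ ≤ 2 * Real.sqrt 2 * ρ ^ (-σ - 1/2) := by rw [e1]; linarith
  have hPA : P + Real.sqrt 2 * ρ ^ (-σ + 1/2) = Real.sqrt 2 * (σ - 1/2) * A := by
    linear_combination hS
  rw [show (-σ + 1/2 : ℝ) = -σ + 1 / 2 by norm_num] at hPA
  have habs : |P + Real.sqrt 2 * ρ ^ (-σ + 1 / 2)|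
      = Real.sqrt 2 * (σ - 1/2) * (Real.sqrt 2 * σ * |B|) := by
    rw [hPA, hA]
    simp only [abs_mul, abs_neg]
    rw [abs_of_nonneg hs2.le, abs_of_nonneg (by linarith : (0:ℝ) ≤ σ - 1/2),
      abs_of_nonneg (by linarith : (0:ℝ) ≤ σ)]
    try ring
  rw [habs]
  have c1 : Real.sqrt 2 * (σ - 1/2) * (Real.sqrt 2 * σ * |B|) = 2 * σ * (σ - 1/2) * |B| := by
    linear_combination (σ * (σ - 1/2) * |B|) * h22
  rw [c1]
  have c2 : 2 * σ * (σ - 1/2) * |B| ≤ 2 * σ * (σ - 1/2) * (2 * Real.sqrt 2 * ρ ^ (-σ - 1/2)) :=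
    mul_le_mul_of_nonneg_left hBle (by nlinarith)
  have h5 : Real.sqrt 2 * (σ - 1/2) ≤ 2 * (σ - 1/2) :=
    mul_le_mul_of_nonneg_right hs2le (by linarith)
  nlinarith [c2, hρpow, hσ, mul_nonneg (by linarith : (0:ℝ) ≤ σ) hρpow,
    mul_le_mul_of_nonneg_right h5 hρpow,
    mul_le_mul_of_nonneg_left (mul_le_mul_of_nonneg_right h5 hρpow)
      (by linarith : (0:ℝ) ≤ 4 * σ)]
end

section
/- Let $\sigma > 1$. Then as $\rho \to \infty$, $\int_{\rho}^{\infty} \sin((2\rho)^{1/2} - (2s)^{1/2}) s^{-\sigma} \log s \, ds = -\sqrt{2}\, \rho^{-\sigma + 1/2} \log \rho + O(\rho^{-\sigma - 1/2} \log \rho)$. -/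
open MeasureTheory Real Set Filter Topology

noncomputable def gg0 (σ s : ℝ) : ℝ := Real.sqrt 2 * s ^ (1/2 - σ) * Real.log s
noncomputable def gg1 (σ s : ℝ) : ℝ := 2 * s ^ (-σ) * ((1/2 - σ) * Real.log s + 1)
noncomputable def gg2 (σ s : ℝ) : ℝ :=
  2 * Real.sqrt 2 * s ^ (-σ - 1/2) * (σ * (σ - 1/2) * Real.log s + (1/2 - 2*σ))
noncomputable def gg3 (σ s : ℝ) : ℝ :=
  2 * Real.sqrt 2 * s ^ (-σ - 3/2) *
    (-((σ + 1/2) * σ * (σ - 1/2)) * Real.log s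
      + ((σ + 1/2) * (2*σ - 1/2) + σ * (σ - 1/2)))

lemma hasDerivAt_gg0 (σ : ℝ) {x : ℝ} (hx : 0 < x) :
    HasDerivAt (gg0 σ) (gg1 σ x / Real.sqrt (2*x)) x := by
  have hxne : x ≠ 0 := hx.ne'
  have h1 : HasDerivAt (fun s : ℝ => s ^ (1/2 - σ)) ((1/2 - σ) * x ^ (1/2 - σ - 1)) x :=
    Real.hasDerivAt_rpow_const (Or.inl hxne)
  have h4 := (h1.const_mul (Real.sqrt 2)).mul (Real.hasDerivAt_log hxne)
  convert h4 using 1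
  iterate 3 rfl
  have hT : Real.sqrt x = x ^ ((1:ℝ)/2) := Real.sqrt_eq_rpow x
  have hTpos : (0:ℝ) < x ^ ((1:ℝ)/2) := Real.rpow_pos_of_pos hx _
  have hx2 : Real.sqrt (2*x) = Real.sqrt 2 * (x ^ ((1:ℝ)/2)) := by
    rw [Real.sqrt_mul (by norm_num) x, hT]
  have hr : (0:ℝ) < Real.sqrt 2 := Real.sqrt_pos.mpr (by norm_num)
  have h2 : Real.sqrt 2 * Real.sqrt 2 = 2 := Real.mul_self_sqrt (by norm_num)
  have e1 : x ^ (1/2 - σ - 1) = x ^ (-σ) / x ^ ((1:ℝ)/2) := by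
    rw [eq_div_iff hTpos.ne', ← Real.rpow_add hx]; congr 1; ring
  have e2 : x ^ (1/2 - σ) = x ^ (-σ) * x ^ ((1:ℝ)/2) := by
    rw [← Real.rpow_add hx]; congr 1; ring
  have hTT : x ^ ((1:ℝ)/2) * x ^ ((1:ℝ)/2) = x := by
    rw [← Real.rpow_add hx]; norm_num
  have h2' : Real.sqrt 2 ^ 2 = 2 := Real.sq_sqrt (by norm_num)
  have hTT2 : (x ^ ((1:ℝ)/2)) ^ 2 = x := by rw [sq]; exact hTT
  have hTT3 : (x ^ ((1:ℝ)/2)) ^ 3 = x * x ^ ((1:ℝ)/2) := by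
    rw [pow_succ, hTT2]
  rw [gg1, hx2, e1, e2]
  field_simp
  ring_nf
  simp only [h2', hTT2, hTT3]
  ring

lemma hasDerivAt_gg1 (σ : ℝ) {x : ℝ} (hx : 0 < x) :
    HasDerivAt (gg1 σ) (gg2 σ x / Real.sqrt (2*x)) x := by
  have hxne : x ≠ 0 := hx.ne'
  have h1 : HasDerivAt (fun s : ℝ => s ^ (-σ)) ((-σ) * x ^ (-σ - 1)) x :=
    Real.hasDerivAt_rpow_const (Or.inl hxne)
  have hinner : HasDerivAt (fun s : ℝ => (1/2 - σ) * Real.log s + 1) ((1/2 - σ) * x⁻¹) x :=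
    ((Real.hasDerivAt_log hxne).const_mul (1/2 - σ)).add_const 1
  have h4 := (h1.const_mul 2).mul hinner
  convert h4 using 1
  iterate 3 rfl
  have hT : Real.sqrt x = x ^ ((1:ℝ)/2) := Real.sqrt_eq_rpow x
  have hTpos : (0:ℝ) < x ^ ((1:ℝ)/2) := Real.rpow_pos_of_pos hx _
  have hx2 : Real.sqrt (2*x) = Real.sqrt 2 * (x ^ ((1:ℝ)/2)) := by
    rw [Real.sqrt_mul (by norm_num) x, hT]
  have h2' : Real.sqrt 2 ^ 2 = 2 := Real.sq_sqrt (by norm_num)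
  have hTT : x ^ ((1:ℝ)/2) * x ^ ((1:ℝ)/2) = x := by rw [← Real.rpow_add hx]; norm_num
  have hTT2 : (x ^ ((1:ℝ)/2)) ^ 2 = x := by rw [sq]; exact hTT
  have hTT3 : (x ^ ((1:ℝ)/2)) ^ 3 = x * x ^ ((1:ℝ)/2) := by rw [pow_succ, hTT2]
  have e1 : x ^ (-σ - 1) = x ^ (-σ) * x⁻¹ := by
    rw [← Real.rpow_neg_one x, ← Real.rpow_add hx]; congr 1
  have e2 : x ^ (-σ - 1/2) = x ^ (-σ) / x ^ ((1:ℝ)/2) := by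
    rw [eq_div_iff hTpos.ne', ← Real.rpow_add hx]; congr 1; ring
  rw [gg2, hx2, e1, e2]
  field_simp
  ring_nf
  simp only [h2', hTT2, hTT3]

lemma hasDerivAt_gg2 (σ : ℝ) {x : ℝ} (hx : 0 < x) :
    HasDerivAt (gg2 σ) (gg3 σ x) x := by
  have hxne : x ≠ 0 := hx.ne'
  have h1 : HasDerivAt (fun s : ℝ => s ^ (-σ - 1/2)) ((-σ - 1/2) * x ^ (-σ - 1/2 - 1)) x :=
    Real.hasDerivAt_rpow_const (Or.inl hxne)
  have hinner : HasDerivAt (fun s : ℝ => σ * (σ - 1/2) * Real.log s + (1/2 - 2*σ))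
      (σ * (σ - 1/2) * x⁻¹) x :=
    ((Real.hasDerivAt_log hxne).const_mul (σ * (σ - 1/2))).add_const (1/2 - 2*σ)
  have h4 := (h1.const_mul (2 * Real.sqrt 2)).mul hinner
  convert h4 using 1
  iterate 3 rfl
  have e0 : x ^ (-σ - 1/2 - 1) = x ^ (-σ - 3/2) := by congr 1; ring
  have e1 : x ^ (-σ - 1/2) = x ^ (-σ - 3/2) * x := by
    have h := Real.rpow_add hx (-σ - 3/2) 1
    rw [Real.rpow_one] at h
    rw [show (-σ - 1/2 : ℝ) = -σ - 3/2 + 1 by ring, h]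
  rw [gg3, e0, e1]
  field_simp
  ring

noncomputable def AAf (σ a s : ℝ) : ℝ :=
  Real.cos (a - Real.sqrt (2*s)) * (gg0 σ s - gg2 σ s)
    + Real.sin (a - Real.sqrt (2*s)) * gg1 σ s

lemma hasDerivAt_AAf (σ a : ℝ) {x : ℝ} (hx : 0 < x) :
    HasDerivAt (AAf σ a)
      (Real.sin (a - Real.sqrt (2*x)) * x ^ (-σ) * Real.log x
        - Real.cos (a - Real.sqrt (2*x)) * gg3 σ x) x := by
  have h2x : (0:ℝ) < 2*x := by linarith
  have hu : (0:ℝ) < Real.sqrt (2*x) := Real.sqrt_pos.mpr h2x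
  have hsqrt : HasDerivAt (fun s : ℝ => Real.sqrt (2*s)) (1 / Real.sqrt (2*x)) x := by
    have h := (Real.hasDerivAt_sqrt h2x.ne').comp x ((hasDerivAt_id x).const_mul 2)
    convert h using 1
    iterate 3 rfl
    field_simp
  have hθ : HasDerivAt (fun s : ℝ => a - Real.sqrt (2*s)) (-(1 / Real.sqrt (2*x))) x :=
    hsqrt.const_sub a
  have hcos := hθ.cos
  have hsin := hθ.sin
  have hA := (hcos.mul ((hasDerivAt_gg0 σ hx).sub (hasDerivAt_gg2 σ hx))).add
    (hsin.mul (hasDerivAt_gg1 σ hx))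
  convert hA using 1
  iterate 3 rfl
  have hT : Real.sqrt x = x ^ ((1:ℝ)/2) := Real.sqrt_eq_rpow x
  have hx2 : Real.sqrt (2*x) = Real.sqrt 2 * (x ^ ((1:ℝ)/2)) := by
    rw [Real.sqrt_mul (by norm_num) x, hT]
  have e2 : x ^ (1/2 - σ) = x ^ (-σ) * x ^ ((1:ℝ)/2) := by
    rw [← Real.rpow_add hx]; congr 1; ring
  have egg0 : gg0 σ x = Real.sqrt (2*x) * (x ^ (-σ) * Real.log x) := by
    rw [gg0, hx2, e2]; ring
  simp only [Pi.sub_apply]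
  rw [egg0]
  field_simp
  ring


lemma aux_powlog_deriv (q : ℝ) (hq : 1 < q) {x : ℝ} (hx : 0 < x) :
    HasDerivAt (fun s : ℝ => -(s ^ (1-q) * Real.log s / (q-1) + s ^ (1-q) / (q-1)^2))
      (x ^ (-q) * Real.log x) x := by
  have hxne : x ≠ 0 := hx.ne'
  have h1 : HasDerivAt (fun s : ℝ => s ^ (1-q)) ((1-q) * x ^ (1-q-1)) x :=
    Real.hasDerivAt_rpow_const (Or.inl hxne)
  have h2 : HasDerivAt Real.log x⁻¹ x := Real.hasDerivAt_log hxne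
  have h4 := (((h1.mul h2).div_const (q-1)).add (h1.div_const ((q-1)^2))).neg
  have e1 : (1-q-1 : ℝ) = -q := by ring
  have e2 : x ^ (1-q) * x⁻¹ = x ^ (-q) := by
    rw [← Real.rpow_neg_one x, ← Real.rpow_add hx]; congr 1
  rw [e1, e2] at h4
  convert h4 using 1
  iterate 3 rfl
  have hq1 : q - 1 ≠ 0 := by linarith
  field_simp
  ring

lemma aux_tendsto_rpow_mul_log {a : ℝ} (ha : a < 0) :
    Tendsto (fun s : ℝ => s ^ a * Real.log s) atTop (𝓝 0) := by
  have h := (isLittleO_log_rpow_atTop (show (0:ℝ) < -a by linarith)).tendsto_div_nhds_zero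
  refine h.congr' ?_
  filter_upwards [eventually_gt_atTop (0:ℝ)] with x hx
  rw [Real.rpow_neg hx.le, div_eq_mul_inv, inv_inv, mul_comm]

lemma aux_tendsto_rpow_zero {a : ℝ} (ha : a < 0) :
    Tendsto (fun s : ℝ => s ^ a) atTop (𝓝 0) := by
  have h := tendsto_rpow_neg_atTop (show (0:ℝ) < -a by linarith)
  simpa using h

lemma aux_powlog_integral (q : ℝ) (hq : 1 < q) {ρ : ℝ} (hρ : 1 ≤ ρ) :
    IntegrableOn (fun s : ℝ => s ^ (-q) * Real.log s) (Ioi ρ) ∧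
    ∫ s in Ioi ρ, s ^ (-q) * Real.log s
      = ρ ^ (1-q) * Real.log ρ / (q-1) + ρ ^ (1-q) / (q-1)^2 := by
  have hρ0 : (0:ℝ) < ρ := lt_of_lt_of_le one_pos hρ
  have hderiv : ∀ x ∈ Ici ρ, HasDerivAt
      (fun s : ℝ => -(s ^ (1-q) * Real.log s / (q-1) + s ^ (1-q) / (q-1)^2))
      (x ^ (-q) * Real.log x) x :=
    fun x hx => aux_powlog_deriv q hq (lt_of_lt_of_le hρ0 hx)
  have hpos : ∀ x ∈ Ioi ρ, 0 ≤ x ^ (-q) * Real.log x := by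
    intro x hx
    have hx1 : (1:ℝ) ≤ x := le_trans hρ (le_of_lt hx)
    exact mul_nonneg (Real.rpow_nonneg (by linarith) _) (Real.log_nonneg hx1)
  have htend : Tendsto (fun s : ℝ => -(s ^ (1-q) * Real.log s / (q-1) + s ^ (1-q) / (q-1)^2))
      atTop (𝓝 0) := by
    have h1 := (aux_tendsto_rpow_mul_log (show (1-q:ℝ) < 0 by linarith)).div_const (q-1)
    have h2 := (aux_tendsto_rpow_zero (show (1-q:ℝ) < 0 by linarith)).div_const ((q-1)^2)
    simpa using (h1.add h2).neg
  refine ⟨integrableOn_Ioi_deriv_of_nonneg' hderiv hpos htend, ?_⟩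
  rw [integral_Ioi_of_hasDerivAt_of_nonneg' hderiv hpos htend]
  ring

lemma tendsto_AAf (σ a : ℝ) (hσ : 1 < σ) : Tendsto (AAf σ a) atTop (𝓝 0) := by
  have h0 : Tendsto (gg0 σ) atTop (𝓝 0) := by
    have h := (aux_tendsto_rpow_mul_log (show (1/2 - σ : ℝ) < 0 by linarith)).const_mul
      (Real.sqrt 2)
    rw [mul_zero] at h
    have he : gg0 σ = fun s => Real.sqrt 2 * (s ^ (1/2 - σ) * Real.log s) := by
      funext s; rw [gg0]; ring
    rw [he]; exact h
  have h1 : Tendsto (gg1 σ) atTop (𝓝 0) := by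
    have ha := (aux_tendsto_rpow_mul_log (show (-σ : ℝ) < 0 by linarith)).const_mul (2*(1/2 - σ))
    have hb := (aux_tendsto_rpow_zero (show (-σ : ℝ) < 0 by linarith)).const_mul 2
    have h := ha.add hb
    rw [mul_zero, mul_zero, add_zero] at h
    have he : gg1 σ = fun s => 2*(1/2 - σ) * (s ^ (-σ) * Real.log s) + 2 * s ^ (-σ) := by
      funext s; rw [gg1]; ring
    rw [he]; exact h
  have h2 : Tendsto (gg2 σ) atTop (𝓝 0) := by
    have ha := (aux_tendsto_rpow_mul_log (show (-σ - 1/2 : ℝ) < 0 by linarith)).const_mul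
      (2*Real.sqrt 2*(σ*(σ-1/2)))
    have hb := (aux_tendsto_rpow_zero (show (-σ - 1/2 : ℝ) < 0 by linarith)).const_mul
      (2*Real.sqrt 2*(1/2 - 2*σ))
    have h := ha.add hb
    rw [mul_zero, mul_zero, add_zero] at h
    have he : gg2 σ = fun s => 2*Real.sqrt 2*(σ*(σ-1/2)) * (s ^ (-σ - 1/2) * Real.log s)
        + 2*Real.sqrt 2*(1/2 - 2*σ) * s ^ (-σ - 1/2) := by
      funext s; rw [gg2]; ring
    rw [he]; exact h
  have hbd : Tendsto (fun s => |gg0 σ s - gg2 σ s| + |gg1 σ s|) atTop (𝓝 0) := by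
    have h := (h0.sub h2).abs.add h1.abs
    norm_num at h
    exact h
  refine squeeze_zero_norm (fun s => ?_) hbd
  rw [AAf]
  refine le_trans (abs_add_le _ _) ?_
  rw [abs_mul, abs_mul]
  gcongr
  · exact mul_le_of_le_one_left (abs_nonneg _) (Real.abs_cos_le_one _)
  · exact mul_le_of_le_one_left (abs_nonneg _) (Real.abs_sin_le_one _)

set_option maxHeartbeats 2000000 in
theorem sin_integral_log_asymptotic (σ : ℝ) (hσ : 1 < σ) :
    ∃ C > 0, ∃ ρ₀ : ℝ, ρ₀ > Real.exp 1 ∧ ∀ ρ ≥ ρ₀,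
      |(∫ s in Ioi ρ, Real.sin (Real.sqrt (2 * ρ) - Real.sqrt (2 * s)) * s ^ (-σ) * Real.log s)
        + Real.sqrt 2 * ρ ^ (-σ + 1 / 2) * Real.log ρ| ≤ C * ρ ^ (-σ - 1 / 2) * Real.log ρ := by
  have hs2 : (0:ℝ) < Real.sqrt 2 := Real.sqrt_pos.mpr (by norm_num)
  set P : ℝ := σ * (σ - 1/2) with hPdef
  set K1 : ℝ := (σ + 1/2) * σ * (σ - 1/2) with hK1def
  set K2 : ℝ := (σ + 1/2) * (2*σ - 1/2) + σ * (σ - 1/2) with hK2def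
  have hP : 0 < P := by rw [hPdef]; nlinarith
  have hK1 : 0 < K1 := by rw [hK1def]; nlinarith
  have hK2 : 0 < K2 := by rw [hK2def]; nlinarith
  set C : ℝ := 2*Real.sqrt 2*(P + 2*σ) + 4*Real.sqrt 2*(K1 + K2) with hCdef
  have hC : 0 < C := by
    have h1 : 0 < 2*Real.sqrt 2*(P + 2*σ) := by
      apply mul_pos (by linarith); linarith
    have h2 : 0 < 4*Real.sqrt 2*(K1 + K2) := by
      apply mul_pos (by linarith); linarith
    linarith
  refine ⟨C, hC, Real.exp 1 + 1, by linarith, fun ρ hρ => ?_⟩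
  have hexp1 : (2:ℝ) ≤ Real.exp 1 := by
    have := Real.add_one_le_exp 1; linarith
  have hρ1 : (1:ℝ) ≤ ρ := by linarith
  have hρpos : (0:ℝ) < ρ := by linarith
  have hL : (1:ℝ) ≤ Real.log ρ := by
    rw [Real.le_log_iff_exp_le hρpos]; linarith
  set a : ℝ := Real.sqrt (2 * ρ) with hadef
  set f : ℝ → ℝ := fun s => Real.sin (a - Real.sqrt (2*s)) * s ^ (-σ) * Real.log s with hfdef
  set r : ℝ → ℝ := fun s => Real.cos (a - Real.sqrt (2*s)) * gg3 σ s with hrdef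
  have hbaseσ := aux_powlog_integral σ hσ hρ1
  have hbase3 := aux_powlog_integral (σ + 3/2) (by linarith) hρ1
  -- basic facts on Ioi ρ
  have hxpos : ∀ x ∈ Ioi ρ, (0:ℝ) < x := fun x hx => lt_trans hρpos hx
  have hxlog : ∀ x ∈ Ioi ρ, (1:ℝ) ≤ Real.log x := fun x hx =>
    le_trans hL (Real.log_le_log hρpos (le_of_lt hx))
  -- measurability
  have hsub0 : Ioi ρ ⊆ ({0}ᶜ : Set ℝ) := fun x hx => by
    simp only [mem_compl_iff, mem_singleton_iff]
    exact (hxpos x hx).ne'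
  have hclog : ContinuousOn Real.log (Ioi ρ) := Real.continuousOn_log.mono hsub0
  have hcrpow : ∀ p : ℝ, ContinuousOn (fun s : ℝ => s ^ p) (Ioi ρ) := fun p =>
    continuousOn_id.rpow_const (fun x hx => Or.inl (hxpos x hx).ne')
  have hctrig : ∀ g : ℝ → ℝ, Continuous g →
      Continuous (fun s : ℝ => g (a - Real.sqrt (2*s))) := fun g hg =>
    hg.comp (continuous_const.sub (Real.continuous_sqrt.comp (continuous_const.mul continuous_id)))
  have hf_meas : AEStronglyMeasurable f (volume.restrict (Ioi ρ)) := by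
    refine ContinuousOn.aestronglyMeasurable ?_ measurableSet_Ioi
    exact (((hctrig Real.sin Real.continuous_sin).continuousOn.mul (hcrpow (-σ))).mul hclog)
  have hr_meas : AEStronglyMeasurable r (volume.restrict (Ioi ρ)) := by
    refine ContinuousOn.aestronglyMeasurable ?_ measurableSet_Ioi
    have hgg3 : ContinuousOn (gg3 σ) (Ioi ρ) := by
      have : gg3 σ = fun s => 2 * Real.sqrt 2 * s ^ (-σ - 3/2) *
          (-((σ + 1/2) * σ * (σ - 1/2)) * Real.log s
            + ((σ + 1/2) * (2*σ - 1/2) + σ * (σ - 1/2))) := rfl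
      rw [this]
      exact (continuousOn_const.mul (hcrpow (-σ - 3/2))).mul
        ((continuousOn_const.mul hclog).add continuousOn_const)
    exact (hctrig Real.cos Real.continuous_cos).continuousOn.mul hgg3
  -- integrability of f
  have hf_int : IntegrableOn f (Ioi ρ) := by
    refine Integrable.mono hbaseσ.1 hf_meas ?_
    rw [ae_restrict_iff' measurableSet_Ioi]
    refine ae_of_all _ (fun x hx => ?_)
    simp only [hfdef, Real.norm_eq_abs]
    rw [abs_mul, abs_mul, abs_mul, mul_assoc]
    exact mul_le_of_le_one_left (mul_nonneg (abs_nonneg _) (abs_nonneg _))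
      (Real.abs_sin_le_one _)
  -- pointwise bound for r
  have hr_bd : ∀ x ∈ Ioi ρ, ‖r x‖ ≤ (2*Real.sqrt 2*(K1 + K2)) * (x ^ (-(σ + 3/2)) * Real.log x) := by
    intro x hx
    have hx0 := hxpos x hx
    have hxL := hxlog x hx
    have hXp : (0:ℝ) < x ^ (-σ - 3/2) := Real.rpow_pos_of_pos hx0 _
    have hexp : x ^ (-σ - 3/2) = x ^ (-(σ + 3/2)) := by congr 1; ring
    have habs : |(-K1) * Real.log x + K2| ≤ (K1 + K2) * Real.log x := by
      rw [abs_le]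
      constructor
      · nlinarith
      · nlinarith
    simp only [hrdef, Real.norm_eq_abs]
    rw [abs_mul]
    calc |Real.cos (a - Real.sqrt (2*x))| * |gg3 σ x| ≤ 1 * |gg3 σ x| := by
          gcongr; exact Real.abs_cos_le_one _
      _ = |gg3 σ x| := one_mul _
      _ ≤ (2*Real.sqrt 2*(K1 + K2)) * (x ^ (-(σ + 3/2)) * Real.log x) := by
          rw [gg3, ← hK1def, ← hK2def]
          rw [abs_mul, abs_mul]
          rw [abs_of_pos (by linarith : (0:ℝ) < 2*Real.sqrt 2), abs_of_pos hXp]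
          calc 2*Real.sqrt 2 * x ^ (-σ - 3/2) * |(-K1) * Real.log x + K2|
              ≤ 2*Real.sqrt 2 * x ^ (-σ - 3/2) * ((K1 + K2) * Real.log x) :=
                mul_le_mul_of_nonneg_left habs (by positivity)
            _ = (2*Real.sqrt 2*(K1 + K2)) * (x ^ (-(σ + 3/2)) * Real.log x) := by
                rw [← hexp]; ring
  -- integrability of r
  have hr_int : IntegrableOn r (Ioi ρ) := by
    refine Integrable.mono (hbase3.1.const_mul (2*Real.sqrt 2*(K1 + K2))) hr_meas ?_
    rw [ae_restrict_iff' measurableSet_Ioi]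
    refine ae_of_all _ (fun x hx => ?_)
    exact le_trans (hr_bd x hx) (le_abs_self _)
  -- FTC
  have hderiv : ∀ x ∈ Ici ρ, HasDerivAt (AAf σ a) (f x - r x) x := fun x hx =>
    hasDerivAt_AAf σ a (lt_of_lt_of_le hρpos hx)
  have hFR_int : IntegrableOn (fun s => f s - r s) (Ioi ρ) := hf_int.sub hr_int
  have key : ∫ s in Ioi ρ, (f s - r s) = 0 - AAf σ a ρ :=
    integral_Ioi_of_hasDerivAt_of_tendsto' hderiv hFR_int (tendsto_AAf σ a hσ)
  have hsplit : ∫ s in Ioi ρ, f s = (0 - AAf σ a ρ) + ∫ s in Ioi ρ, r s := by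
    have e : ∀ s : ℝ, f s = (f s - r s) + r s := fun s => by ring
    calc ∫ s in Ioi ρ, f s = ∫ s in Ioi ρ, ((f s - r s) + r s) := by
          refine integral_congr_ae (ae_of_all _ ?_); intro s; exact e s
      _ = (∫ s in Ioi ρ, (f s - r s)) + ∫ s in Ioi ρ, r s := integral_add hFR_int hr_int
      _ = (0 - AAf σ a ρ) + ∫ s in Ioi ρ, r s := by rw [key]
  have hAρ : AAf σ a ρ = gg0 σ ρ - gg2 σ ρ := by
    rw [AAf, hadef]
    simp
  -- bound on ∫ r
  have hRbound : |∫ s in Ioi ρ, r s| ≤ (4*Real.sqrt 2*(K1 + K2)) * (ρ ^ (-σ - 1/2) * Real.log ρ) := by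
    have h1 : ‖∫ s in Ioi ρ, r s‖ ≤
        ∫ s in Ioi ρ, (2*Real.sqrt 2*(K1 + K2)) * (s ^ (-(σ + 3/2)) * Real.log s) := by
      refine norm_integral_le_of_norm_le (hbase3.1.const_mul _) ?_
      rw [ae_restrict_iff' measurableSet_Ioi]
      exact ae_of_all _ (fun x hx => hr_bd x hx)
    rw [Real.norm_eq_abs] at h1
    have h2 : ∫ s in Ioi ρ, (2*Real.sqrt 2*(K1 + K2)) * (s ^ (-(σ + 3/2)) * Real.log s)
        = (2*Real.sqrt 2*(K1 + K2)) *
          (ρ ^ (1 - (σ + 3/2)) * Real.log ρ / (σ + 3/2 - 1) + ρ ^ (1 - (σ + 3/2)) / (σ + 3/2 - 1)^2) := by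
      rw [MeasureTheory.integral_const_mul, hbase3.2]
    have hXp : (0:ℝ) < ρ ^ (-σ - 1/2) := Real.rpow_pos_of_pos hρpos _
    have hexp2 : ρ ^ (1 - (σ + 3/2)) = ρ ^ (-σ - 1/2) := by congr 1; ring
    have hd : (1:ℝ) < σ + 3/2 - 1 := by linarith
    have h3 : ρ ^ (1 - (σ + 3/2)) * Real.log ρ / (σ + 3/2 - 1) + ρ ^ (1 - (σ + 3/2)) / (σ + 3/2 - 1)^2
        ≤ 2 * (ρ ^ (-σ - 1/2) * Real.log ρ) := by
      rw [hexp2]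
      have hw : (0:ℝ) ≤ ρ ^ (-σ - 1/2) * Real.log ρ :=
        mul_nonneg hXp.le (by linarith)
      have ha1 : ρ ^ (-σ - 1/2) * Real.log ρ / (σ + 3/2 - 1) ≤ ρ ^ (-σ - 1/2) * Real.log ρ := by
        rw [div_le_iff₀ (by linarith)]
        have := mul_le_mul_of_nonneg_left (show (1:ℝ) ≤ σ + 3/2 - 1 by linarith) hw
        linarith [this]
      have ha2 : ρ ^ (-σ - 1/2) / (σ + 3/2 - 1)^2 ≤ ρ ^ (-σ - 1/2) * Real.log ρ := by
        have hb1 : ρ ^ (-σ - 1/2) / (σ + 3/2 - 1)^2 ≤ ρ ^ (-σ - 1/2) := by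
          apply div_le_self hXp.le
          nlinarith
        have hb2 : ρ ^ (-σ - 1/2) ≤ ρ ^ (-σ - 1/2) * Real.log ρ :=
          le_mul_of_one_le_right hXp.le hL
        linarith
      linarith
    calc |∫ s in Ioi ρ, r s| ≤ _ := h1
      _ = _ := h2
      _ ≤ (2*Real.sqrt 2*(K1 + K2)) * (2 * (ρ ^ (-σ - 1/2) * Real.log ρ)) :=
          mul_le_mul_of_nonneg_left h3 (by positivity)
      _ = (4*Real.sqrt 2*(K1 + K2)) * (ρ ^ (-σ - 1/2) * Real.log ρ) := by ring
  -- bound on gg2 ρ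
  have hgg2bd : |gg2 σ ρ| ≤ (2*Real.sqrt 2*(P + 2*σ)) * (ρ ^ (-σ - 1/2) * Real.log ρ) := by
    have hXp : (0:ℝ) < ρ ^ (-σ - 1/2) := Real.rpow_pos_of_pos hρpos _
    rw [gg2, ← hPdef, abs_mul, abs_mul]
    rw [abs_of_pos (by linarith : (0:ℝ) < 2*Real.sqrt 2), abs_of_pos hXp]
    have habs : |P * Real.log ρ + (1/2 - 2*σ)| ≤ (P + 2*σ) * Real.log ρ := by
      rw [abs_le]
      constructor
      · nlinarith
      · nlinarith
    calc 2*Real.sqrt 2 * ρ ^ (-σ - 1/2) * |P * Real.log ρ + (1/2 - 2*σ)|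
        ≤ 2*Real.sqrt 2 * ρ ^ (-σ - 1/2) * ((P + 2*σ) * Real.log ρ) :=
          mul_le_mul_of_nonneg_left habs (by positivity)
      _ = (2*Real.sqrt 2*(P + 2*σ)) * (ρ ^ (-σ - 1/2) * Real.log ρ) := by ring
  -- final assembly
  have hgoal : (∫ s in Ioi ρ, f s) + Real.sqrt 2 * ρ ^ (-σ + 1/2) * Real.log ρ
      = gg2 σ ρ + ∫ s in Ioi ρ, r s := by
    rw [hsplit, hAρ, gg0]
    rw [show (-σ + 1/2 : ℝ) = 1/2 - σ by ring]
    ring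
  rw [hgoal]
  calc |gg2 σ ρ + ∫ s in Ioi ρ, r s| ≤ |gg2 σ ρ| + |∫ s in Ioi ρ, r s| := abs_add_le _ _
    _ ≤ (2*Real.sqrt 2*(P + 2*σ)) * (ρ ^ (-σ - 1/2) * Real.log ρ)
        + (4*Real.sqrt 2*(K1 + K2)) * (ρ ^ (-σ - 1/2) * Real.log ρ) := by
          linarith
    _ = C * ρ ^ (-σ - 1/2) * Real.log ρ := by rw [hCdef]; ring
end

section
/- For $0 < a \ll 1$, $e^{|\log a|}\int_{|\log a|}^{\infty}(t - 2\log t)^{1/2}e^{-t}\,dt \cdot a = a\left[(|\log a| - 2\log|\log a|)^{1/2} + \tfrac12 |\log a|^{-1/2} + O(|\log a|^{-3/2}\log|\log a|)\right]$. -/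
open MeasureTheory Real Set

namespace IntExpAux

noncomputable def g (t : ℝ) : ℝ := t - 2 * Real.log t
noncomputable def f (t : ℝ) : ℝ := Real.sqrt (g t)
noncomputable def f1 (t : ℝ) : ℝ := (1 - 2 * t⁻¹) / (2 * Real.sqrt (g t))
noncomputable def f2 (t : ℝ) : ℝ :=
  (t ^ 2)⁻¹ / Real.sqrt (g t) - (1 - 2 * t⁻¹) ^ 2 / (4 * Real.sqrt (g t) ^ 3)

lemma two_log_le {t : ℝ} (ht : 1 ≤ t) : 2 * Real.log t ≤ 4 * Real.sqrt t := by
  have h0 : (0:ℝ) < t := by linarith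
  have hs : Real.log (Real.sqrt t) ≤ Real.sqrt t - 1 :=
    Real.log_le_sub_one_of_pos (Real.sqrt_pos.mpr h0)
  rw [Real.log_sqrt h0.le] at hs
  have : (0:ℝ) ≤ Real.sqrt t := Real.sqrt_nonneg t
  linarith

lemma g_ge {t : ℝ} (ht : 64 ≤ t) : t / 2 ≤ g t := by
  have h1 : (1:ℝ) ≤ t := by linarith
  have h2 := two_log_le h1
  have hs : Real.sqrt t ≤ t / 8 := by
    have : Real.sqrt t ≤ Real.sqrt (t ^ 2 / 64) := by
      apply Real.sqrt_le_sqrt; nlinarith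
    rwa [show t ^ 2 / 64 = (t / 8) ^ 2 by ring, Real.sqrt_sq (by linarith)] at this
  unfold g; linarith

lemma g_pos {t : ℝ} (ht : 64 ≤ t) : 0 < g t := lt_of_lt_of_le (by linarith) (g_ge ht)

lemma g_le {t : ℝ} (ht : 64 ≤ t) : g t ≤ t := by
  have : 0 ≤ Real.log t := Real.log_nonneg (by linarith)
  unfold g; linarith

lemma sqrt_g_ge {t : ℝ} (ht : 64 ≤ t) : Real.sqrt t / 2 ≤ Real.sqrt (g t) := by
  have := g_ge ht
  calc Real.sqrt t / 2 = Real.sqrt (t / 4) := by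
        rw [show t/4 = t * (1/2)^2 by ring, Real.sqrt_mul (by linarith),
          Real.sqrt_sq (by norm_num)]; ring
    _ ≤ Real.sqrt (g t) := Real.sqrt_le_sqrt (by linarith)

lemma hasDerivAt_g {t : ℝ} (ht : 64 ≤ t) : HasDerivAt g (1 - 2 * t⁻¹) t := by
  have h := (Real.hasDerivAt_log (by positivity : t ≠ 0)).const_mul 2
  exact (hasDerivAt_id' t).sub h

lemma hasDerivAt_f {t : ℝ} (ht : 64 ≤ t) : HasDerivAt f (f1 t) t := by
  have h := (hasDerivAt_g ht).sqrt (ne_of_gt (g_pos ht))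
  exact h

end IntExpAux

namespace IntExpAux

lemma sqrt_g_pos {t : ℝ} (ht : 64 ≤ t) : 0 < Real.sqrt (g t) := Real.sqrt_pos.mpr (g_pos ht)

lemma hasDerivAt_f1 {t : ℝ} (ht : 64 ≤ t) : HasDerivAt f1 (f2 t) t := by
  have ht0 : (0:ℝ) < t := by linarith
  have hs : Real.sqrt (g t) ≠ 0 := ne_of_gt (sqrt_g_pos ht)
  have hu : HasDerivAt (fun t : ℝ => 1 - 2 * t⁻¹) (2 * (t ^ 2)⁻¹) t := by
    have h := (hasDerivAt_inv (ne_of_gt ht0)).const_mul 2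
    exact ((hasDerivAt_const t (1:ℝ)).fun_sub h).congr_deriv (by ring)
  have hv : HasDerivAt (fun t : ℝ => 2 * Real.sqrt (g t))
      (2 * ((1 - 2 * t⁻¹) / (2 * Real.sqrt (g t)))) t :=
    ((hasDerivAt_g ht).sqrt (ne_of_gt (g_pos ht))).const_mul 2
  have hv0 : (2 : ℝ) * Real.sqrt (g t) ≠ 0 := by positivity
  have h := hu.fun_div hv hv0
  refine h.congr_deriv ?_
  have hsq : Real.sqrt (g t) ^ 2 = g t := Real.sq_sqrt (g_pos ht).le
  rw [f2]; field_simp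
  ring

lemma sqrt_le {t : ℝ} (ht : 64 ≤ t) : Real.sqrt t ≤ t := by
  calc Real.sqrt t ≤ Real.sqrt (t ^ 2) := Real.sqrt_le_sqrt (by nlinarith)
    _ = t := Real.sqrt_sq (by linarith)

lemma sqrt_ge8 {t : ℝ} (ht : 64 ≤ t) : 8 ≤ Real.sqrt t := by
  calc (8:ℝ) = Real.sqrt 64 := by rw [show (64:ℝ) = 8^2 by norm_num, Real.sqrt_sq]; norm_num
    _ ≤ Real.sqrt t := Real.sqrt_le_sqrt ht

lemma f_nonneg (t : ℝ) : 0 ≤ f t := Real.sqrt_nonneg _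

lemma f_le {t : ℝ} (ht : 64 ≤ t) : f t ≤ t :=
  le_trans (Real.sqrt_le_sqrt (g_le ht)) (sqrt_le ht)

lemma u_bounds {t : ℝ} (ht : 64 ≤ t) : 0 ≤ 1 - 2 * t⁻¹ ∧ 1 - 2 * t⁻¹ ≤ 1 := by
  have h0 : (0:ℝ) < t := by linarith
  constructor
  · have : 2 * t⁻¹ ≤ 1 := by rw [mul_inv_le_iff₀ h0]; linarith
    linarith
  · have : 0 ≤ 2 * t⁻¹ := by positivity
    linarith

lemma f1_bounds {t : ℝ} (ht : 64 ≤ t) : 0 ≤ f1 t ∧ f1 t ≤ 1 := by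
  obtain ⟨hu0, hu1⟩ := u_bounds ht
  have hs : 4 ≤ Real.sqrt (g t) := by
    have := sqrt_g_ge ht; have := sqrt_ge8 ht; linarith
  constructor
  · exact div_nonneg hu0 (by linarith)
  · rw [f1, div_le_one (by linarith)]; linarith

lemma f2_abs_le {t : ℝ} (ht : 64 ≤ t) : |f2 t| ≤ 3 / (t * Real.sqrt t) := by
  obtain ⟨hu0, hu1⟩ := u_bounds ht
  have h0 : (0:ℝ) < t := by linarith
  have hrt : 8 ≤ Real.sqrt t := sqrt_ge8 ht
  have hs2 : Real.sqrt t / 2 ≤ Real.sqrt (g t) := sqrt_g_ge ht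
  have hs0 : 0 < Real.sqrt (g t) := sqrt_g_pos ht
  have hrt2 : Real.sqrt t ^ 2 = t := Real.sq_sqrt h0.le
  have hA : (t ^ 2)⁻¹ / Real.sqrt (g t) ≤ 1 / (t * Real.sqrt t) := by
    rw [inv_eq_one_div, div_div, div_le_div_iff₀ (by positivity) (by positivity)]
    have hs4 : 4 ≤ Real.sqrt (g t) := by linarith
    have h1 : t * Real.sqrt t ≤ t * t := by nlinarith [sqrt_le ht]
    have h2 : t * t ≤ t ^ 2 * Real.sqrt (g t) := by nlinarith
    linarith
  have hB : (1 - 2 * t⁻¹) ^ 2 / (4 * Real.sqrt (g t) ^ 3) ≤ 2 / (t * Real.sqrt t) := by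
    rw [div_le_div_iff₀ (by positivity) (by positivity)]
    have hu2 : (1 - 2 * t⁻¹) ^ 2 ≤ 1 := by nlinarith
    have hc : t * Real.sqrt t = Real.sqrt t ^ 3 := by
      rw [pow_succ, hrt2, mul_comm]
    have hcube : (Real.sqrt t / 2) ^ 3 ≤ Real.sqrt (g t) ^ 3 :=
      pow_le_pow_left₀ (by positivity) hs2 3
    have htnn : 0 ≤ t * Real.sqrt t := by positivity
    nlinarith [mul_nonneg (sub_nonneg.mpr hu2) htnn]
  have hA0 : 0 ≤ (t ^ 2)⁻¹ / Real.sqrt (g t) := by positivity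
  have hB0 : 0 ≤ (1 - 2 * t⁻¹) ^ 2 / (4 * Real.sqrt (g t) ^ 3) := by positivity
  rw [f2]
  calc |((t ^ 2)⁻¹ / Real.sqrt (g t)) - (1 - 2 * t⁻¹) ^ 2 / (4 * Real.sqrt (g t) ^ 3)|
      ≤ |(t ^ 2)⁻¹ / Real.sqrt (g t)| + |(1 - 2 * t⁻¹) ^ 2 / (4 * Real.sqrt (g t) ^ 3)| :=
        abs_sub _ _
    _ ≤ 1 / (t * Real.sqrt t) + 2 / (t * Real.sqrt t) := by
        rw [abs_of_nonneg hA0, abs_of_nonneg hB0]; exact add_le_add hA hB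
    _ = 3 / (t * Real.sqrt t) := by ring

end IntExpAux

namespace IntExpAux

lemma one_le_log {L : ℝ} (hL : 100 ≤ L) : 1 ≤ Real.log L := by
  rw [Real.le_log_iff_exp_le (by linarith)]
  have := Real.exp_one_lt_d9
  linarith

lemma le_exp_half {t : ℝ} (ht : 64 ≤ t) : t ≤ Real.exp (t / 2) := by
  have h0 : (0:ℝ) < t := by linarith
  have h1 : Real.log t ≤ t / 2 := by
    have h2 := two_log_le (by linarith : (1:ℝ) ≤ t)
    have h3 : 4 * Real.sqrt t ≤ t / 2 := by
      have := sqrt_ge8 ht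
      nlinarith [Real.sq_sqrt h0.le]
    linarith
  calc t = Real.exp (Real.log t) := (Real.exp_log h0).symm
    _ ≤ Real.exp (t / 2) := Real.exp_le_exp.mpr h1

lemma f1_est {L : ℝ} (hL : 100 ≤ L) :
    |f1 L - 1 / (2 * Real.sqrt L)| ≤ 4 / (L * Real.sqrt L) * Real.log L := by
  have hL64 : (64:ℝ) ≤ L := by linarith
  have h0 : (0:ℝ) < L := by linarith
  set r := Real.sqrt L with hrdef
  set s := Real.sqrt (g L) with hsdef
  have hr2 : r ^ 2 = L := Real.sq_sqrt h0.le
  have hs2 : s ^ 2 = g L := Real.sq_sqrt (g_pos hL64).le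
  have hr0 : 0 < r := Real.sqrt_pos.mpr h0
  have hs0 : 0 < s := sqrt_g_pos hL64
  have hsr : s ≤ r := Real.sqrt_le_sqrt (g_le hL64)
  have hrs2 : r / 2 ≤ s := sqrt_g_ge hL64
  have hlog : 1 ≤ Real.log L := one_le_log hL
  have key : f1 L - 1 / (2 * r) = (r * (r - s) - 2) / (2 * s * r ^ 2) := by
    rw [f1, ← hsdef, ← hr2]
    field_simp
    ring
  have hrs : (r - s) * (r + s) = 2 * Real.log L := by
    have : g L = L - 2 * Real.log L := rfl
    nlinarith
  have hnum : |r * (r - s) - 2| ≤ 4 * Real.log L := by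
    have h1 : r * (r - s) ≤ 2 * Real.log L := by nlinarith
    have h2 : 0 ≤ r * (r - s) := by nlinarith
    rw [abs_le]; constructor <;> nlinarith
  rw [key, abs_div, abs_of_pos (by positivity : (0:ℝ) < 2 * s * r ^ 2)]
  have hden : L * r ≤ 2 * s * r ^ 2 := by nlinarith
  calc |r * (r - s) - 2| / (2 * s * r ^ 2) ≤ (4 * Real.log L) / (L * r) := by
        apply div_le_div₀ (by positivity) hnum (by positivity) hden
    _ = 4 / (L * r) * Real.log L := by ring

end IntExpAux

namespace IntExpAux

lemma measurable_g : Measurable g :=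
  measurable_id.sub (measurable_const.mul Real.measurable_log)

lemma measurable_f : Measurable f :=
  Real.continuous_sqrt.measurable.comp measurable_g

lemma measurable_f1 : Measurable f1 := by
  unfold f1
  exact (measurable_const.sub (measurable_const.mul measurable_inv)).div
    ((measurable_const.mul (Real.continuous_sqrt.measurable.comp measurable_g)))

lemma measurable_f2 : Measurable f2 := by
  unfold f2
  have hsg : Measurable fun t => Real.sqrt (g t) :=
    Real.continuous_sqrt.measurable.comp measurable_g
  exact (((measurable_id.pow_const 2).inv.div hsg)).sub
    (((measurable_const.sub (measurable_const.mul measurable_inv)).pow_const 2).div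
      ((measurable_const.mul (hsg.pow_const 3))))

end IntExpAux

open IntExpAux

theorem integral_expansion :
    ∃ C > 0, ∃ L₀ : ℝ, ∀ L ≥ L₀,
      |Real.exp L * (∫ t in Ioi L, Real.sqrt (t - 2 * Real.log t) * Real.exp (-t))
          - (Real.sqrt (L - 2 * Real.log L) + (1 / 2) * L ^ (-(1 : ℝ) / 2))|
        ≤ C * L ^ (-(3 : ℝ) / 2) * Real.log L := by
  refine ⟨10, by norm_num, 100, fun L hL => ?_⟩
  have hL64 : (64:ℝ) ≤ L := by linarith
  have h0 : (0:ℝ) < L := by linarith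
  -- derivative of F
  have hFderiv : ∀ x ∈ Ici L, HasDerivAt (fun t => -((f t + f1 t) * Real.exp (-t)))
      ((f x - f2 x) * Real.exp (-x)) x := by
    intro x hx
    have hx64 : (64:ℝ) ≤ x := le_trans hL64 hx
    have hde : HasDerivAt (fun t : ℝ => Real.exp (-t)) (-Real.exp (-x)) x := by
      simpa using (HasDerivAt.exp (hasDerivAt_id x).neg)
    have h := (((hasDerivAt_f hx64).fun_add (hasDerivAt_f1 hx64)).fun_mul hde).fun_neg
    refine h.congr_deriv ?_
    ring
  -- uniform decay bound
  have hbound : ∀ x, L ≤ x → |(f x - f2 x) * Real.exp (-x)| ≤ 2 * Real.exp (-(1/2) * x) := by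
    intro x hx
    have hx64 : (64:ℝ) ≤ x := le_trans hL64 hx
    have hx0 : (0:ℝ) < x := by linarith
    have hf2 : |f2 x| ≤ 1 := by
      refine le_trans (f2_abs_le hx64) ?_
      rw [div_le_one (by positivity)]
      nlinarith [sqrt_ge8 hx64]
    have h1 : |f x - f2 x| ≤ x + 1 := by
      have := f_le hx64; have := f_nonneg x
      have := abs_le.mp hf2
      rw [abs_le]; constructor <;> [nlinarith; nlinarith]
    have h2 : x + 1 ≤ 2 * Real.exp (x / 2) := by
      have := le_exp_half hx64
      have h3 : (1:ℝ) ≤ Real.exp (x / 2) := by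
        rw [Real.one_le_exp_iff]; linarith
      linarith
    calc |(f x - f2 x) * Real.exp (-x)| = |f x - f2 x| * Real.exp (-x) := by
          rw [abs_mul, abs_of_pos (Real.exp_pos _)]
      _ ≤ (x + 1) * Real.exp (-x) := by
          exact mul_le_mul_of_nonneg_right h1 (Real.exp_pos _).le
      _ ≤ (2 * Real.exp (x / 2)) * Real.exp (-x) := by
          exact mul_le_mul_of_nonneg_right h2 (Real.exp_pos _).le
      _ = 2 * Real.exp (-(1/2) * x) := by
          rw [mul_assoc, ← Real.exp_add]; ring_nf
  -- integrabilities
  have hexp_half : IntegrableOn (fun x : ℝ => 2 * Real.exp (-(1/2) * x)) (Ioi L) :=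
    (exp_neg_integrableOn_Ioi L (by norm_num : (0:ℝ) < 1/2)).const_mul 2
  have hexp1 : IntegrableOn (fun x : ℝ => Real.exp (-x)) (Ioi L) := by
    simpa using exp_neg_integrableOn_Ioi L one_pos
  have hmeas_exp : Measurable fun x : ℝ => Real.exp (-x) :=
    Real.measurable_exp.comp measurable_neg
  have hintF' : IntegrableOn (fun x => (f x - f2 x) * Real.exp (-x)) (Ioi L) := by
    refine Integrable.mono' hexp_half
      (((measurable_f.sub measurable_f2).mul hmeas_exp).aestronglyMeasurable) ?_
    refine (ae_restrict_iff' measurableSet_Ioi).mpr (ae_of_all _ fun x hx => ?_)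
    exact hbound x (le_of_lt hx)
  have hintf : IntegrableOn (fun x => f x * Real.exp (-x)) (Ioi L) := by
    refine Integrable.mono' hexp_half
      ((measurable_f.mul hmeas_exp).aestronglyMeasurable) ?_
    refine (ae_restrict_iff' measurableSet_Ioi).mpr (ae_of_all _ fun x hx => ?_)
    have hx64 : (64:ℝ) ≤ x := le_trans hL64 (le_of_lt hx)
    have h2 : f x ≤ 2 * Real.exp (x / 2) := by
      have := le_exp_half hx64; have := f_le hx64
      have := (Real.exp_pos (x/2)).le
      linarith
    calc ‖f x * Real.exp (-x)‖ = f x * Real.exp (-x) := by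
          rw [Real.norm_eq_abs, abs_of_nonneg (mul_nonneg (f_nonneg x) (Real.exp_pos _).le)]
      _ ≤ (2 * Real.exp (x / 2)) * Real.exp (-x) :=
          mul_le_mul_of_nonneg_right h2 (Real.exp_pos _).le
      _ = 2 * Real.exp (-(1/2) * x) := by rw [mul_assoc, ← Real.exp_add]; ring_nf
  have hint2 : IntegrableOn (fun x => f2 x * Real.exp (-x)) (Ioi L) := by
    refine Integrable.mono' hexp1
      ((measurable_f2.mul hmeas_exp).aestronglyMeasurable) ?_
    refine (ae_restrict_iff' measurableSet_Ioi).mpr (ae_of_all _ fun x hx => ?_)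
    have hx64 : (64:ℝ) ≤ x := le_trans hL64 (le_of_lt hx)
    have hf2 : |f2 x| ≤ 1 := by
      refine le_trans (f2_abs_le hx64) ?_
      rw [div_le_one (by positivity)]
      nlinarith [sqrt_ge8 hx64]
    calc ‖f2 x * Real.exp (-x)‖ = |f2 x| * Real.exp (-x) := by
          rw [Real.norm_eq_abs, abs_mul, abs_of_pos (Real.exp_pos _)]
      _ ≤ 1 * Real.exp (-x) := mul_le_mul_of_nonneg_right hf2 (Real.exp_pos _).le
      _ = Real.exp (-x) := one_mul _
  -- limit of F at infinity
  have hFtendsto : Filter.Tendsto (fun t => -((f t + f1 t) * Real.exp (-t)))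
      Filter.atTop (nhds 0) := by
    apply squeeze_zero_norm' (a := fun t : ℝ => 2 * Real.exp (-(1/2) * t))
    · filter_upwards [Filter.eventually_ge_atTop (max L 100)] with x hx
      have hxL : L ≤ x := le_trans (le_max_left _ _) hx
      have hx64 : (64:ℝ) ≤ x := le_trans hL64 hxL
      have h1 : |f x + f1 x| ≤ x + 1 := by
        have := f_le hx64; have := f_nonneg x
        obtain ⟨h10, h11⟩ := f1_bounds hx64
        rw [abs_le]; constructor <;> nlinarith
      have h2 : x + 1 ≤ 2 * Real.exp (x / 2) := by
        have := le_exp_half hx64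
        have h3 : (1:ℝ) ≤ Real.exp (x / 2) := by
          rw [Real.one_le_exp_iff]; linarith
        linarith
      calc ‖-((f x + f1 x) * Real.exp (-x))‖ = |f x + f1 x| * Real.exp (-x) := by
            rw [norm_neg, Real.norm_eq_abs, abs_mul, abs_of_pos (Real.exp_pos _)]
        _ ≤ (2 * Real.exp (x / 2)) * Real.exp (-x) :=
            mul_le_mul_of_nonneg_right (le_trans h1 h2) (Real.exp_pos _).le
        _ = 2 * Real.exp (-(1/2) * x) := by rw [mul_assoc, ← Real.exp_add]; ring_nf
    · have h1 : Filter.Tendsto (fun t : ℝ => -(1/2) * t) Filter.atTop Filter.atBot := by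
        have := Filter.Tendsto.const_mul_atTop_of_neg (by norm_num : (-(1:ℝ)/2) < 0)
          (Filter.tendsto_id (α := ℝ))
        convert this using 2 with t
        simp; ring
      have h2 := Real.tendsto_exp_atBot.comp h1
      have := h2.const_mul (2:ℝ)
      simpa using this
  -- FTC on (L, ∞)
  have hkey := integral_Ioi_of_hasDerivAt_of_tendsto' hFderiv hintF' hFtendsto
  simp only [zero_sub, neg_neg] at hkey
  -- split the integral
  have hsplit : (∫ x in Ioi L, (f x - f2 x) * Real.exp (-x))
      = (∫ x in Ioi L, f x * Real.exp (-x)) - ∫ x in Ioi L, f2 x * Real.exp (-x) := by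
    rw [← integral_sub hintf hint2]
    congr 1; ext x; ring
  have hI : (∫ x in Ioi L, f x * Real.exp (-x))
      = (f L + f1 L) * Real.exp (-L) + ∫ x in Ioi L, f2 x * Real.exp (-x) := by
    rw [← hkey, hsplit]; ring
  -- bound the remainder integral
  have hrem : |∫ x in Ioi L, f2 x * Real.exp (-x)|
      ≤ 3 / (L * Real.sqrt L) * Real.exp (-L) := by
    have h1 : |∫ x in Ioi L, f2 x * Real.exp (-x)|
        ≤ ∫ x in Ioi L, |f2 x * Real.exp (-x)| := by
      have := norm_integral_le_integral_norm (μ := volume.restrict (Ioi L))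
        (fun x => f2 x * Real.exp (-x))
      simpa only [Real.norm_eq_abs] using this
    have h2 : (∫ x in Ioi L, |f2 x * Real.exp (-x)|)
        ≤ ∫ x in Ioi L, 3 / (L * Real.sqrt L) * Real.exp (-x) := by
      refine setIntegral_mono_on hint2.abs (hexp1.const_mul _) measurableSet_Ioi ?_
      intro x hx
      have hxL : L ≤ x := le_of_lt hx
      have hx64 : (64:ℝ) ≤ x := le_trans hL64 hxL
      have hmono : L * Real.sqrt L ≤ x * Real.sqrt x :=
        mul_le_mul hxL (Real.sqrt_le_sqrt hxL) (Real.sqrt_nonneg _) (by linarith)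
      have h3 : |f2 x| ≤ 3 / (L * Real.sqrt L) := by
        refine le_trans (f2_abs_le hx64) ?_
        exact div_le_div_of_nonneg_left (by norm_num) (by positivity) hmono
      rw [abs_mul, abs_of_pos (Real.exp_pos _)]
      exact mul_le_mul_of_nonneg_right h3 (Real.exp_pos _).le
    have h3 : (∫ x in Ioi L, 3 / (L * Real.sqrt L) * Real.exp (-x))
        = 3 / (L * Real.sqrt L) * Real.exp (-L) := by
      rw [MeasureTheory.integral_const_mul, integral_exp_neg_Ioi]
    linarith
  -- rpow conversions
  have hsqrtL : (0:ℝ) < Real.sqrt L := Real.sqrt_pos.mpr h0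
  have hr12 : (1/2 : ℝ) * L ^ (-(1:ℝ)/2) = 1 / (2 * Real.sqrt L) := by
    rw [show (-(1:ℝ)/2) = -(1/2) by norm_num, Real.rpow_neg h0.le,
      ← Real.sqrt_eq_rpow]
    field_simp
  have hr32 : L ^ (-(3:ℝ)/2) = (L * Real.sqrt L)⁻¹ := by
    rw [show (-(3:ℝ)/2) = -(3/2) by norm_num, Real.rpow_neg h0.le,
      show (3/2 : ℝ) = 1 + 1/2 by norm_num, Real.rpow_add h0, Real.rpow_one,
      ← Real.sqrt_eq_rpow]
  -- assemble
  have hIeq : (∫ t in Ioi L, Real.sqrt (t - 2 * Real.log t) * Real.exp (-t))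
      = ∫ x in Ioi L, f x * Real.exp (-x) := rfl
  have hfL : Real.sqrt (L - 2 * Real.log L) = f L := rfl
  rw [hIeq, hfL, hI, hr12]
  have hexpL : Real.exp L * Real.exp (-L) = 1 := by
    rw [← Real.exp_add]; simp
  have hlogL : 1 ≤ Real.log L := one_le_log hL
  have heq : Real.exp L * ((f L + f1 L) * Real.exp (-L) + ∫ x in Ioi L, f2 x * Real.exp (-x))
      - (f L + 1 / (2 * Real.sqrt L))
      = (f1 L - 1 / (2 * Real.sqrt L))
        + Real.exp L * ∫ x in Ioi L, f2 x * Real.exp (-x) := by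
    have : Real.exp L * ((f L + f1 L) * Real.exp (-L)) = f L + f1 L := by
      rw [show Real.exp L * ((f L + f1 L) * Real.exp (-L))
        = (Real.exp L * Real.exp (-L)) * (f L + f1 L) by ring, hexpL, one_mul]
    calc Real.exp L * ((f L + f1 L) * Real.exp (-L) + ∫ x in Ioi L, f2 x * Real.exp (-x))
        - (f L + 1 / (2 * Real.sqrt L))
        = Real.exp L * ((f L + f1 L) * Real.exp (-L))
          + Real.exp L * (∫ x in Ioi L, f2 x * Real.exp (-x))
          - (f L + 1 / (2 * Real.sqrt L)) := by ring
      _ = (f1 L - 1 / (2 * Real.sqrt L))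
          + Real.exp L * ∫ x in Ioi L, f2 x * Real.exp (-x) := by rw [this]; ring
  rw [heq]
  have hb1 : |f1 L - 1 / (2 * Real.sqrt L)| ≤ 4 / (L * Real.sqrt L) * Real.log L := f1_est hL
  have hb2 : |Real.exp L * ∫ x in Ioi L, f2 x * Real.exp (-x)| ≤ 3 / (L * Real.sqrt L) := by
    rw [abs_mul, abs_of_pos (Real.exp_pos _)]
    calc Real.exp L * |∫ x in Ioi L, f2 x * Real.exp (-x)|
        ≤ Real.exp L * (3 / (L * Real.sqrt L) * Real.exp (-L)) :=
          mul_le_mul_of_nonneg_left hrem (Real.exp_pos _).le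
      _ = (Real.exp L * Real.exp (-L)) * (3 / (L * Real.sqrt L)) := by ring
      _ = 3 / (L * Real.sqrt L) := by rw [hexpL, one_mul]
  calc |(f1 L - 1 / (2 * Real.sqrt L)) + Real.exp L * ∫ x in Ioi L, f2 x * Real.exp (-x)|
      ≤ |f1 L - 1 / (2 * Real.sqrt L)| + |Real.exp L * ∫ x in Ioi L, f2 x * Real.exp (-x)| :=
        abs_add_le _ _
    _ ≤ 4 / (L * Real.sqrt L) * Real.log L + 3 / (L * Real.sqrt L) := add_le_add hb1 hb2
    _ ≤ 10 * L ^ (-(3:ℝ)/2) * Real.log L := by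
        rw [hr32]
        have hpos : (0:ℝ) < L * Real.sqrt L := by positivity
        have h1 : 3 / (L * Real.sqrt L) ≤ 3 / (L * Real.sqrt L) * Real.log L := by
          nlinarith [div_pos (by norm_num : (0:ℝ) < 3) hpos]
        have h2 : 4 / (L * Real.sqrt L) * Real.log L + 3 / (L * Real.sqrt L) * Real.log L
            = 7 * (L * Real.sqrt L)⁻¹ * Real.log L := by field_simp; ring
        nlinarith [mul_pos (inv_pos.mpr hpos) (by linarith : (0:ℝ) < Real.log L)]
end
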